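/- arXiv:math/0703739 — 7 statements merged into one kernel-verified Lean document; each statement's English description precedes it below -/
import Mathlib

section
/- Let G = K ⋊_θ Q. Suppose there exist q ≠ 1 in Q with finite conjugacy class in Q and k ∈ K whose orbit under θ(Q) is finite, such that θ_q is conjugation by k (i.e., θ_q(x) = k⁻¹xk for all x ∈ K). Then G is not icc. -/
/-!
Because `θ q` is conjugation by `k`, the element `ω = ⟨k, q⟩` commutes with every element of
`K`. Writing an arbitrary element as `inr p * inl a`, the factor `inl a` therefore acts
trivially on `ω`, so the conjugates of `ω` are the elements
`inr p * ω * (inr p)⁻¹ = ⟨θ p k, p * q * p⁻¹⟩`, and these lie in the image of the finite set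
`θ(Q)k × conjClass q`.
-/

/-- The conjugacy class of `u` in `G`. -/
def conjClass {G : Type*} [Group G] (u : G) : Set G := {x | IsConj u x}

/-- A group is icc if it is nontrivial and every nontrivial conjugacy class is infinite. -/
def IsICC (G : Type*) [Group G] : Prop :=
  Nontrivial G ∧ ∀ g : G, g ≠ 1 → (conjClass g).Infinite

namespace SemidirectProduct

variable {N G : Type*} [Group N] [Group G] {φ : G →* MulAut N}

theorem exists_inr_mul_inl_eq (x : N ⋊[φ] G) : ∃ g n, (inr g * inl n : N ⋊[φ] G) = x :=
  ⟨x.right, (φ x.right)⁻¹ x.left, by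
    rw [inl_aut_inv, ← mul_assoc, ← mul_assoc, ← map_mul, mul_inv_cancel, map_one, one_mul,
      inl_left_mul_inr_right]⟩

theorem inl_commute_mk_of_forall_eq_conj {n : N} {g : G} (h : ∀ x, φ g x = n⁻¹ * x * n)
    (x : N) :
    Commute (inl x : N ⋊[φ] G) ⟨n, g⟩ := by
  ext
  · simp [mul_left, h, mul_assoc]
  · simp

theorem conjClass_eq_range_inr_conj_of_commute_inl {ω : N ⋊[φ] G}
    (hω : ∀ x, Commute (inl x) ω) :
    conjClass ω = Set.range fun g => inr g * ω * (inr g)⁻¹ := by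
  ext y
  refine ⟨fun hy => ?_, fun ⟨g, hg⟩ => isConj_iff.mpr ⟨inr g, hg⟩⟩
  obtain ⟨c, rfl⟩ := isConj_iff.mp hy
  obtain ⟨p, a, rfl⟩ := exists_inr_mul_inl_eq c
  refine ⟨p, ?_⟩
  calc inr p * ω * (inr p)⁻¹ = inr p * (inl a * ω * (inl a)⁻¹) * (inr p)⁻¹ := by
        rw [(hω a).eq, mul_inv_cancel_right]
    _ = inr p * inl a * ω * (inr p * inl a)⁻¹ := by group

theorem inr_mul_mk_mul_inr_inv (g q : G) (n : N) :
    inr g * (⟨n, q⟩ : N ⋊[φ] G) * (inr g)⁻¹ = ⟨φ g n, g * q * g⁻¹⟩ := by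
  ext <;> simp [mul_left, mul_right]

theorem conjClass_mk_finite_of_forall_eq_conj {n : N} {g : G} (h : ∀ x, φ g x = n⁻¹ * x * n)
    (hn : (Set.range fun p => φ p n).Finite) (hg : (conjClass g).Finite) :
    (conjClass (⟨n, g⟩ : N ⋊[φ] G)).Finite := by
  rw [conjClass_eq_range_inr_conj_of_commute_inl (inl_commute_mk_of_forall_eq_conj h)]
  refine ((hn.prod hg).image fun x => (⟨x.1, x.2⟩ : N ⋊[φ] G)).subset ?_
  rintro _ ⟨p, rfl⟩
  exact ⟨(φ p n, p * g * p⁻¹), ⟨⟨p, rfl⟩, isConj_iff.mpr ⟨p, rfl⟩⟩,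
    (inr_mul_mk_mul_inr_inv p g n).symm⟩

end SemidirectProduct

theorem not_icc_of_inner_with_finite_orbit {K Q : Type*} [Group K] [Group Q]
    (θ : Q →* MulAut K) (q : Q) (hq : q ≠ 1) (hqFC : (conjClass q).Finite)
    (k : K) (horb : (Set.range fun p : Q => θ p k).Finite)
    (hconj : ∀ x : K, θ q x = k⁻¹ * x * k) :
    ¬ IsICC (K ⋊[θ] Q) := by
  rintro ⟨-, hinf⟩
  have hω : (⟨k, q⟩ : K ⋊[θ] Q) ≠ 1 := fun h => hq (congrArg SemidirectProduct.right h)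
  exact hinf _ hω (SemidirectProduct.conjClass_mk_finite_of_forall_eq_conj hconj horb hqFC)
end

section
/- Let G = K ⋊_θ Q with Q finite. Then G is icc if and only if K is icc and the induced map Θ : Q → Out(K) is injective. -/
open Subgroup

theorem conjClass_finite_iff_finiteIndex_centralizer {G : Type*} [Group G] (g : G) :
    (conjClass g).Finite ↔ (centralizer {g}).FiniteIndex := by
  have horbit : conjClass g = MulAction.orbit (ConjAct G) g := by
    rw [ConjAct.orbit_eq_carrier_conjClasses]; rfl
  rw [horbit, ← Set.finite_coe_iff, finiteIndex_iff_finite_quotient]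
  exact ((MulAction.orbitEquivQuotientStabilizer (ConjAct G) g).trans
    (quotientEquivOfEq (ConjAct.stabilizer_eq_centralizer g))).finite_iff

instance Subgroup.finiteIndex_comap {G G' : Type*} [Group G] [Group G'] (H : Subgroup G)
    [H.FiniteIndex] (f : G' →* G) : (H.comap f).FiniteIndex :=
  finiteIndex_iff.mpr <| by
    rw [index_comap]; exact (isFiniteRelIndex_of_finiteIndex (K := f.range)).relIndex_ne_zero

namespace IsICC

variable {G : Type*} [Group G]

theorem eq_one_of_finiteIndex_centralizer (hG : IsICC G) {g : G}
    (hg : (centralizer {g}).FiniteIndex) : g = 1 := by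
  by_contra hne
  exact hG.2 g hne ((conjClass_finite_iff_finiteIndex_centralizer g).2 hg)

theorem eq_one_of_conj_eq_one (hG : IsICC G) {g : G} (hg : MulAut.conj g = 1) : g = 1 := by
  refine hG.eq_one_of_finiteIndex_centralizer (finiteIndex_of_le (H := ⊤) fun a _ => ?_)
  have hga : g * a * g⁻¹ = a := by rw [← MulAut.conj_apply, hg, MulAut.one_apply]
  exact mem_centralizer_singleton_iff.2 (mul_inv_eq_iff_eq_mul.1 hga).symm

theorem infinite (hG : IsICC G) : Infinite G := by
  by_contra hfin
  rw [not_infinite_iff_finite] at hfin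
  obtain ⟨g, hg⟩ := @exists_ne G hG.1 1
  exact hg (hG.eq_one_of_finiteIndex_centralizer inferInstance)

theorem of_injective {H : Type*} [Group H] (hG : IsICC G) (f : H →* G)
    (hf : Function.Injective f) [f.range.FiniteIndex] : IsICC H := by
  refine ⟨?_, fun h hh hfin => hh ?_⟩
  · by_contra htriv
    rw [not_nontrivial_iff_subsingleton] at htriv
    have hrange : Finite f.range := (Set.finite_range f).to_subtype
    have hfinite : Finite G :=
      (finite_iff_finite_and_finiteIndex f.range).2 ⟨hrange, inferInstance⟩
    exact @not_finite G hG.infinite hfinite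
  · rw [conjClass_finite_iff_finiteIndex_centralizer] at hfin
    have hmap : ((centralizer {h}).map f).FiniteIndex := by
      rw [finiteIndex_iff, (centralizer {h}).index_map_of_injective hf]
      exact mul_ne_zero FiniteIndex.index_ne_zero FiniteIndex.index_ne_zero
    have hle : (centralizer {h}).map f ≤ centralizer {f h} := by
      rintro _ ⟨c, hc, rfl⟩
      rw [SetLike.mem_coe, mem_centralizer_singleton_iff] at hc
      rw [mem_centralizer_singleton_iff, ← map_mul, hc, map_mul]
    exact hf ((hG.eq_one_of_finiteIndex_centralizer (finiteIndex_of_le hle)).trans f.map_one.symm)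

theorem mulAut_eq_one_of_fixes_finiteIndex (hG : IsICC G) (ψ : MulAut G) (H : Subgroup G)
    [H.FiniteIndex] (hψ : ∀ h ∈ H, ψ h = h) : ψ = 1 := by
  ext x
  suffices x⁻¹ * ψ x = 1 from (inv_mul_eq_one.1 this).symm
  refine hG.eq_one_of_finiteIndex_centralizer (finiteIndex_of_le (H := H.normalCore) ?_)
  intro n hn
  rw [mem_centralizer_singleton_iff]
  have hconj : ψ (x * n * x⁻¹) = x * n * x⁻¹ :=
    hψ _ (H.normalCore_le (H.normalCore_normal.conj_mem n hn x))
  simp only [map_mul, map_inv, hψ n (H.normalCore_le hn)] at hconj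
  calc n * (x⁻¹ * ψ x) = x⁻¹ * (x * n * x⁻¹) * ψ x := by group
    _ = x⁻¹ * ψ x * n := by rw [← hconj]; group

end IsICC

namespace SemidirectProduct

variable {K Q : Type*} [Group K] [Group Q] (θ : Q →* MulAut K)

theorem inl_mem_centralizer_iff (a : K) (g : K ⋊[θ] Q) :
    inl a ∈ centralizer {g} ↔ (MulAut.conj g.left * θ g.right) a = a := by
  rw [mem_centralizer_singleton_iff, SemidirectProduct.ext_iff, MulAut.mul_apply,
    MulAut.conj_apply, mul_inv_eq_iff_eq_mul, eq_comm]
  simp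

instance finiteIndex_range_inl [Finite Q] : (inl : K →* K ⋊[θ] Q).range.FiniteIndex := by
  rw [range_inl_eq_ker_rightHom]
  infer_instance

end SemidirectProduct

open SemidirectProduct

theorem icc_iff_of_finite_quotient {K Q : Type*} [Group K] [Group Q] [Finite Q]
    (θ : Q →* MulAut K) :
    IsICC (K ⋊[θ] Q) ↔
      IsICC K ∧ ∀ q : Q, (∃ k : K, θ q = MulAut.conj k) → q = 1 := by
  constructor
  · intro hG
    have hK : IsICC K := hG.of_injective inl inl_injective
    refine ⟨hK, fun q ⟨k, hk⟩ => ?_⟩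
    have hcent : (inl : K →* K ⋊[θ] Q).range ≤ centralizer {⟨k⁻¹, q⟩} := by
      rintro _ ⟨a, rfl⟩
      rw [inl_mem_centralizer_iff, MulAut.mul_apply, hk]
      simp [MulAut.conj_apply, mul_assoc]
    exact congrArg right (hG.eq_one_of_finiteIndex_centralizer (finiteIndex_of_le hcent))
  · rintro ⟨hK, hΘ⟩
    have : Nontrivial K := hK.1
    refine ⟨inl_injective.nontrivial, fun g hg hfin => hg ?_⟩
    rw [conjClass_finite_iff_finiteIndex_centralizer] at hfin
    have hψ : MulAut.conj g.left * θ g.right = 1 :=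
      hK.mulAut_eq_one_of_fixes_finiteIndex _ ((centralizer {g}).comap inl)
        fun a => (inl_mem_centralizer_iff θ a g).1
    have hq : g.right = 1 :=
      hΘ _ ⟨g.left⁻¹, by rw [map_inv]; exact eq_inv_of_mul_eq_one_right hψ⟩
    rw [hq, map_one, mul_one] at hψ
    exact SemidirectProduct.ext (hK.eq_one_of_conj_eq_one hψ) hq
end

section
/- Let G = K ⋊_θ Q with Z(K) = 1. If q ∈ Q has finite conjugacy class in Q and θ_q(x) = k⁻¹xk for all x ∈ K (some fixed k ∈ K), then the θ(Q)-orbit of k is finite. -/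
/-!
Since `θ q` is conjugation by `k⁻¹`, every `θ p` with `p` centralizing `q` commutes with that inner
automorphism, so it conjugates it into conjugation by `(θ p k)⁻¹`; as `K` is centerless, `θ p k = k`.
Hence `p ↦ θ p k` is constant on the cosets of the centralizer of `q`, which has finite index
because the conjugacy class of `q` is finite.
-/

namespace MulAut

variable {G : Type*} [Group G]

theorem ker_conj : (conj : G →* MulAut G).ker = Subgroup.center G := by
  ext g
  simp only [MonoidHom.mem_ker, MulEquiv.ext_iff, conj_apply, one_apply, Subgroup.mem_center_iff]
  exact forall_congr' fun x => by rw [eq_comm, eq_mul_inv_iff_mul_eq]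

theorem conj_injective_of_center_eq_bot (hZ : Subgroup.center G = ⊥) :
    Function.Injective (conj : G →* MulAut G) := by
  rw [← MonoidHom.ker_eq_bot_iff, ker_conj, hZ]

theorem mul_conj_mul_inv (σ : MulAut G) (g : G) : σ * conj g * σ⁻¹ = conj (σ g) := by
  ext x
  simp [conj_apply]

theorem apply_eq_self_of_commute_conj (hZ : Subgroup.center G = ⊥) {σ : MulAut G} {g : G}
    (h : Commute σ (conj g)) : σ g = g :=
  conj_injective_of_center_eq_bot hZ <| by rw [← mul_conj_mul_inv, h.eq, mul_inv_cancel_right]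

end MulAut

theorem finiteIndex_centralizer_of_conjClass_finite {G : Type*} [Group G] {g : G}
    (hg : (conjClass g).Finite) : (Subgroup.centralizer {g}).FiniteIndex := by
  have horbit : MulAction.orbit (ConjAct G) g = conjClass g :=
    Set.ext fun _ => ConjAct.mem_orbit_conjAct.trans isConj_comm
  have hindex :
      (Subgroup.centralizer {g}).index = (MulAction.stabilizer (ConjAct G) g).index := by
    rw [Subgroup.centralizer_eq_comap_stabilizer]
    exact Subgroup.index_comap_of_surjective _ ConjAct.toConjAct.surjective
  rw [Subgroup.finiteIndex_iff, hindex, MulAction.index_stabilizer, horbit]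
  exact ((Set.ncard_pos hg).mpr ⟨g, IsConj.refl g⟩).ne'

theorem Subgroup.finite_range_of_forall_mul_eq {G X : Type*} [Group G] (H : Subgroup G)
    [H.FiniteIndex] {f : G → X} (hf : ∀ g, ∀ h ∈ H, f (g * h) = f g) : (Set.range f).Finite := by
  refine (Set.finite_range fun c : G ⧸ H => f c.out).subset ?_
  rintro _ ⟨g, rfl⟩
  obtain ⟨h, hh⟩ := QuotientGroup.mk_out_eq_mul H g
  exact ⟨g, (congrArg f hh).trans (hf g h h.2)⟩

theorem finite_orbit_of_inner_centerless {K Q : Type*} [Group K] [Group Q]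
    (θ : Q →* MulAut K) (hZ : Subgroup.center K = ⊥)
    (q : Q) (hq : (conjClass q).Finite) (k : K)
    (hconj : ∀ x : K, θ q x = k⁻¹ * x * k) :
    (Set.range fun p : Q => θ p k).Finite := by
  have hθq : θ q = MulAut.conj k⁻¹ := by
    ext x
    simp [hconj]
  have := finiteIndex_centralizer_of_conjClass_finite hq
  refine (Subgroup.centralizer {q}).finite_range_of_forall_mul_eq fun p c hc => ?_
  have hcq : Commute c q := Subgroup.mem_centralizer_singleton_iff.mp hc
  have hcomm : Commute (θ c) (MulAut.conj k⁻¹) := hθq ▸ hcq.map θ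
  have hfix : θ c k = k := by
    simpa using MulAut.apply_eq_self_of_commute_conj hZ hcomm
  simp [hfix]
end

section
/- Let G = K ⋊_θ Q where every θ(Q)-orbit in K ∖ {1} is infinite and every conjugacy class in Q ∖ {1} is infinite (i.e. FC(Q) = 1). If additionally K is icc or trivial, and G is nontrivial, then G is icc. -/
theorem icc_of_infinite_orbits_and_FCQ_trivial {K Q : Type*} [Group K] [Group Q]
    (θ : Q →* MulAut K) (hG : Nontrivial (K ⋊[θ] Q))
    (horb : ∀ k : K, k ≠ 1 → (Set.range fun q : Q => θ q k).Infinite)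
    (hQ : ∀ q : Q, q ≠ 1 → (conjClass q).Infinite)
    (hK : ∀ k : K, k ≠ 1 → (conjClass k).Infinite) :
    IsICC (K ⋊[θ] Q) := by
  refine ⟨hG, ?_⟩
  rintro ⟨k, q⟩ hg
  by_cases hq : q = 1
  · subst hq
    have hk : k ≠ 1 := by
      intro h
      exact hg (by ext <;> simp [h])
    have h1 : Set.range (fun p : Q => (SemidirectProduct.inl (θ p k) : K ⋊[θ] Q)) ⊆
        conjClass (⟨k, 1⟩ : K ⋊[θ] Q) := by
      rintro _ ⟨p, rfl⟩
      refine isConj_iff.mpr ⟨SemidirectProduct.inr p, ?_⟩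
      rw [show ({left := k, right := 1} : K ⋊[θ] Q) = SemidirectProduct.inl k from rfl,
        ← map_inv]
      exact (SemidirectProduct.inl_aut p k).symm
    have h2 : (Set.range fun p : Q => (SemidirectProduct.inl (θ p k) : K ⋊[θ] Q)).Infinite := by
      rw [show (fun p : Q => (SemidirectProduct.inl (θ p k) : K ⋊[θ] Q)) =
        SemidirectProduct.inl ∘ (fun p : Q => θ p k) from rfl, Set.range_comp]
      exact (horb k hk).image SemidirectProduct.inl_injective.injOn
    exact h2.mono h1
  · have hsub : conjClass q ⊆
        SemidirectProduct.rightHom '' conjClass (⟨k, q⟩ : K ⋊[θ] Q) := by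
      rintro x hx
      obtain ⟨p, hp⟩ := isConj_iff.mp hx
      refine ⟨SemidirectProduct.inr p * ⟨k, q⟩ * (SemidirectProduct.inr p)⁻¹,
        isConj_iff.mpr ⟨_, rfl⟩, ?_⟩
      simpa using hp
    exact ((hQ q hq).mono hsub).of_image _
end

section
/- Let G = K ⋊_θ Q where every θ(Q)-orbit in K ∖ {1} is infinite. Then G is icc if and only if the restriction of θ to FC(Q) is injective. -/
/-! A nontrivial conjugacy class of `K ⋊[θ] Q` is infinite as soon as its elements have a
nontrivial `K`-component (conjugating by `Q` moves that component along an infinite `θ`-orbit)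
or their `Q`-component has an infinite class in `Q`. An element `inr q` with `q` in `FC(Q)`
escapes both cases, and its class is finite exactly when `θ q = 1`: if `θ q a ≠ a`, conjugating
by `inl a` produces the nontrivial `K`-component `a * (θ q a)⁻¹`, while if `θ q = 1` then
`inr q` commutes with `K` and its conjugates are the `inr` of its conjugates in `Q`. Since
`FC(Q)` is a subgroup, the icc property thus says exactly that `ker θ ∩ FC(Q)` is trivial. -/

section ConjClass

variable {G : Type*} [Group G]

lemma conjClass_eq_range (u : G) : conjClass u = Set.range fun c => c * u * c⁻¹ := by
  ext x
  simp [conjClass, isConj_iff]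

lemma conjClass_one : conjClass (1 : G) = {1} := by
  simp [conjClass_eq_range]

lemma IsConj.conjClass_subset {u v : G} (h : IsConj u v) : conjClass v ⊆ conjClass u :=
  fun _ hx => h.trans hx

lemma conjClass_mul_inv_finite {a b : G} (ha : (conjClass a).Finite)
    (hb : (conjClass b).Finite) : (conjClass (a * b⁻¹)).Finite := by
  refine (ha.image2 (fun x y => x * y⁻¹) hb).subset ?_
  rw [conjClass_eq_range]
  rintro _ ⟨c, rfl⟩
  exact ⟨c * a * c⁻¹, isConj_iff.2 ⟨c, rfl⟩, c * b * c⁻¹, isConj_iff.2 ⟨c, rfl⟩, by group⟩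

end ConjClass

namespace SemidirectProduct

variable {N G : Type*} [Group N] [Group G] {φ : G →* MulAut N}

lemma inr_mul_mul_inr_inv (p : G) (g : N ⋊[φ] G) :
    inr p * g * (inr p)⁻¹ = ⟨φ p g.left, p * g.right * p⁻¹⟩ := by
  ext <;> simp [mul_assoc]

lemma inl_mul_inr_mul_inl_inv (a : N) (q : G) :
    inl a * inr q * (inl a : N ⋊[φ] G)⁻¹ = ⟨a * (φ q a)⁻¹, q⟩ := by
  ext <;> simp

lemma mul_inr_mul_inv_of_map_eq_one {q : G} (hq : φ q = 1) (c : N ⋊[φ] G) :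
    c * inr q * c⁻¹ = inr (c.right * q * c.right⁻¹) := by
  ext
  · simp [hq]
  · simp

lemma conjClass_infinite_of_orbit_left_infinite {g : N ⋊[φ] G}
    (h : (Set.range fun p : G => φ p g.left).Infinite) : (conjClass g).Infinite := by
  have hleft : left '' Set.range (fun p : G => inr p * g * (inr p)⁻¹) =
      Set.range fun p : G => φ p g.left := by
    rw [← Set.range_comp]
    simp only [Function.comp_def, inr_mul_mul_inr_inv]
  refine ((hleft ▸ h).of_image left).mono ?_
  rintro _ ⟨p, rfl⟩
  exact isConj_iff.2 ⟨inr p, rfl⟩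

lemma conjClass_infinite_of_conjClass_right_infinite {g : N ⋊[φ] G}
    (h : (conjClass g.right).Infinite) : (conjClass g).Infinite := by
  refine Set.Infinite.of_image right (h.mono ?_)
  rw [conjClass_eq_range]
  rintro _ ⟨p, rfl⟩
  exact ⟨inr p * g * (inr p)⁻¹, isConj_iff.2 ⟨inr p, rfl⟩, by rw [inr_mul_mul_inr_inv]⟩

lemma conjClass_inr_finite {q : G} (hq : φ q = 1) (hfin : (conjClass q).Finite) :
    (conjClass (inr q : N ⋊[φ] G)).Finite := by
  refine (hfin.image inr).subset ?_
  rw [conjClass_eq_range]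
  rintro _ ⟨c, rfl⟩
  exact ⟨_, isConj_iff.2 ⟨c.right, rfl⟩, (mul_inr_mul_inv_of_map_eq_one hq c).symm⟩

lemma conjClass_inr_infinite (horb : ∀ k : N, k ≠ 1 → (Set.range fun p : G => φ p k).Infinite)
    {q : G} (hq : φ q ≠ 1) : (conjClass (inr q : N ⋊[φ] G)).Infinite := by
  obtain ⟨a, ha⟩ : ∃ a : N, φ q a ≠ a := by
    by_contra! h
    exact hq (MulEquiv.ext h)
  have hconj : IsConj (inr q : N ⋊[φ] G) ⟨a * (φ q a)⁻¹, q⟩ :=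
    isConj_iff.2 ⟨inl a, inl_mul_inr_mul_inl_inv a q⟩
  refine (conjClass_infinite_of_orbit_left_infinite ?_).mono hconj.conjClass_subset
  exact horb _ fun h => ha (mul_inv_eq_one.1 h).symm

end SemidirectProduct

open SemidirectProduct in
theorem icc_iff_theta_injOn_FC {K Q : Type*} [Group K] [Group Q]
    (θ : Q →* MulAut K) (hG : Nontrivial (K ⋊[θ] Q))
    (horb : ∀ k : K, k ≠ 1 → (Set.range fun q : Q => θ q k).Infinite) :
    IsICC (K ⋊[θ] Q) ↔ Set.InjOn θ {q : Q | (conjClass q).Finite} := by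
  constructor
  · rintro ⟨-, hicc⟩ q₁ h₁ q₂ h₂ hθ
    have hker : θ (q₁ * q₂⁻¹) = 1 := by rw [map_mul, map_inv, hθ, mul_inv_cancel]
    have hfin := conjClass_inr_finite (N := K) hker (conjClass_mul_inv_finite h₁ h₂)
    by_contra hne
    exact hicc _ (by simpa [mul_inv_eq_one] using hne) hfin
  · intro hinj
    refine ⟨hG, fun g hg => ?_⟩
    by_cases hleft : g.left = 1
    swap
    · exact conjClass_infinite_of_orbit_left_infinite (horb _ hleft)
    rw [← inl_left_mul_inr_right g, hleft, map_one, one_mul] at hg ⊢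
    by_cases hright : (conjClass g.right).Finite
    swap
    · exact conjClass_infinite_of_conjClass_right_infinite hright
    have hq : g.right ≠ 1 := by rintro h; simp [h] at hg
    refine conjClass_inr_infinite horb fun hker => hq (hinj hright ?_ ?_)
    · simp [conjClass_one]
    · rw [hker, map_one]
end

section
/- The icc property is stable under semidirect products: if K and Q are both icc, then G = K ⋊_θ Q is icc for any θ : Q → Aut(K). -/
theorem icc_stable_under_semidirect_product {K Q : Type*} [Group K] [Group Q]
    (θ : Q →* MulAut K) (hK : IsICC K) (hQ : IsICC Q) :
    IsICC (K ⋊[θ] Q) := by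
  obtain ⟨hKnt, hKicc⟩ := hK
  obtain ⟨_, hQicc⟩ := hQ
  constructor
  · obtain ⟨x, y, hxy⟩ := hKnt
    exact ⟨SemidirectProduct.inl x, SemidirectProduct.inl y,
      fun h => hxy (SemidirectProduct.inl_injective h)⟩
  · intro g hg
    by_cases hq : g.right = 1
    · -- the Q-component is trivial, so g is in (the image of) K
      have hkne : g.left ≠ 1 := by
        intro h
        exact hg (by ext <;> simp [h, hq])
      have hgeq : SemidirectProduct.inl (φ := θ) g.left = g := by
        ext <;> simp [hq]
      have hsub : (SemidirectProduct.inl (φ := θ)) '' conjClass g.left ⊆ conjClass g := by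
        rintro _ ⟨x, hx, rfl⟩
        have : IsConj (SemidirectProduct.inl (φ := θ) g.left)
            (SemidirectProduct.inl (φ := θ) x) := SemidirectProduct.inl.map_isConj (hx : IsConj g.left x)
        rwa [hgeq] at this
      exact (((hKicc g.left hkne).image
        (SemidirectProduct.inl_injective.injOn))).mono hsub
    · -- the Q-component is nontrivial: project to Q
      have hsub : conjClass g.right ⊆
          (SemidirectProduct.rightHom (φ := θ)) '' conjClass g := by
        rintro x hx
        obtain ⟨c, hc⟩ := isConj_iff.1 (hx : IsConj g.right x)
        refine ⟨SemidirectProduct.inr c * g * (SemidirectProduct.inr c)⁻¹,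
          isConj_iff.2 ⟨SemidirectProduct.inr c, rfl⟩, ?_⟩
        simp only [map_mul, map_inv, SemidirectProduct.rightHom_inr]
        rw [show (SemidirectProduct.rightHom (φ := θ)) g = g.right from rfl, hc]
      exact Set.Infinite.of_image _ ((hQicc g.right hq).mono hsub)
end

section
/- Let G = K ⋊_θ Q with Q icc. Then G is icc if and only if the action of θ(Q) has no finite orbit on FC(K) ∖ {1}. -/
private lemma mem_conjClass_iff {G : Type*} [Group G] {u x : G} :
    x ∈ conjClass u ↔ ∃ c : G, c * u * c⁻¹ = x := by
  simp [conjClass, isConj_iff]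

open SemidirectProduct in
private lemma conj_inl_formula {K Q : Type*} [Group K] [Group Q] (θ : Q →* MulAut K)
    (a : K) (q : Q) (k : K) :
    (⟨a, q⟩ : K ⋊[θ] Q) * inl k * (⟨a, q⟩ : K ⋊[θ] Q)⁻¹ = inl (a * θ q k * a⁻¹) := by
  ext <;> simp [mul_assoc]

theorem icc_iff_no_finite_orbit_on_FC {K Q : Type*} [Group K] [Group Q]
    (θ : Q →* MulAut K) (hQ : IsICC Q) :
    IsICC (K ⋊[θ] Q) ↔
      ∀ k : K, k ≠ 1 → (conjClass k).Finite →
        ¬ (Set.range fun q : Q => θ q k).Finite := by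
  open SemidirectProduct in
  constructor
  · rintro ⟨-, hG⟩ k hk hfin horb
    have hne : (inl k : K ⋊[θ] Q) ≠ 1 := by
      simpa using fun h => hk (by simpa using congrArg SemidirectProduct.left h)
    refine hG (inl k) hne ?_
    have hsub : conjClass (inl k : K ⋊[θ] Q) ⊆
        inl '' (⋃ m ∈ (Set.range fun q : Q => θ q k), conjClass m) := by
      intro x hx
      obtain ⟨c, hc⟩ := mem_conjClass_iff.mp hx
      obtain ⟨a, q⟩ := c
      rw [conj_inl_formula] at hc
      refine ⟨a * θ q k * a⁻¹, ?_, hc⟩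
      exact Set.mem_biUnion ⟨q, rfl⟩ (mem_conjClass_iff.mpr ⟨a, rfl⟩)
    refine Set.Finite.subset (Set.Finite.image _ (Set.Finite.biUnion horb ?_)) hsub
    rintro m ⟨q, rfl⟩
    have : conjClass ((θ q) k) ⊆ (θ q) '' conjClass k := by
      intro x hx
      obtain ⟨c, hc⟩ := mem_conjClass_iff.mp hx
      refine ⟨(θ q)⁻¹ x, mem_conjClass_iff.mpr ⟨(θ q)⁻¹ c, (θ q).injective ?_⟩, by simp⟩
      simpa [map_mul] using hc
    exact Set.Finite.subset (hfin.image _) this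
  · rintro h
    obtain ⟨hQnt, hQicc⟩ := hQ
    constructor
    · obtain ⟨q, hq⟩ := exists_ne (1 : Q)
      exact ⟨inr q, 1, fun hh => hq (by simpa using congrArg SemidirectProduct.right hh)⟩
    · rintro g hg
      by_cases hqr : g.right = 1
      · set k := g.left with hkdef
        have hgk : g = inl k := by ext <;> simp [hqr, hkdef]
        have hk1 : k ≠ 1 := fun hk1 => hg (by rw [hgk, hk1, map_one])
        by_cases hcf : (conjClass k).Finite
        · have horb := h k hk1 hcf
          have hsub : (inl '' Set.range fun q : Q => θ q k) ⊆ conjClass g := by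
            rintro x ⟨m, ⟨p, rfl⟩, rfl⟩
            rw [hgk]
            exact mem_conjClass_iff.mpr ⟨inr p, by rw [← map_inv]; exact (inl_aut p k).symm⟩
          refine Set.Infinite.mono hsub ?_
          refine Set.Infinite.image (Set.injOn_of_injective inl_injective) ?_
          exact fun hf => horb hf
        · have hsub : (inl '' conjClass k) ⊆ conjClass g := by
            rintro x ⟨m, hm, rfl⟩
            obtain ⟨c, hc⟩ := mem_conjClass_iff.mp hm
            rw [hgk]
            exact mem_conjClass_iff.mpr ⟨inl c, by rw [← map_mul, ← map_inv, ← map_mul, hc]⟩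
          exact Set.Infinite.mono hsub
            (Set.Infinite.image (Set.injOn_of_injective inl_injective) hcf)
      · have hQinf := hQicc g.right hqr
        have hsub : conjClass g.right ⊆ rightHom '' conjClass g := by
          intro x hx
          obtain ⟨c, hc⟩ := mem_conjClass_iff.mp hx
          refine ⟨inr c * g * (inr c)⁻¹, mem_conjClass_iff.mpr ⟨inr c, rfl⟩, ?_⟩
          simpa using hc
        intro hf
        exact hQinf (Set.Finite.subset (hf.image _) hsub)
end
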